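/- Let 1 ≤ k < n and let ρ be an admissible order on the k-element subsets of [n]. Let β(ρ) be the coadmissible order on the (n−k)-element subsets of [n] defined by: A < B in β(ρ) if and only if [n] \ B < [n] \ A in ρ. Then the coreversal set of β(ρ) equals the complemented reversal set of ρ: Corev(β(ρ)) = {[n] \ X : X ∈ Rev(ρ)}. -/
import Mathlib


open Finset

/-- The `k`-element subsets of `[n] = {1, …, n}`. -/
def ksubsets (n k : ℕ) : Finset (Finset ℕ) := (Finset.Icc 1 n).powersetCard k

/-- The packet of `X`: all subsets of `X` with one element removed. -/
def packet (X : Finset ℕ) : Finset (Finset ℕ) := X.image (fun x => X.erase x)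

/-- The copacket of `X` with respect to `[n]`: all sets `X ∪ {i}` for `i ∈ [n] \ X`. -/
def copacket (n : ℕ) (X : Finset ℕ) : Finset (Finset ℕ) :=
  ((Finset.Icc 1 n) \ X).image (fun i => insert i X)

/-- The lexicographic order on finite sets of naturals viewed as increasing lists:
`X < Y` iff there is `m ∈ X \ Y` below which `X` and `Y` agree. -/
def lexLt (X Y : Finset ℕ) : Prop :=
  ∃ m ∈ X, m ∉ Y ∧ ∀ a < m, (a ∈ X ↔ a ∈ Y)

/-- `r` is a strict linear order on the collection `D`. -/
def IsStrictOrdOn (D : Finset (Finset ℕ)) (r : Finset ℕ → Finset ℕ → Prop) : Prop :=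
  (∀ X ∈ D, ¬ r X X) ∧
  (∀ X ∈ D, ∀ Y ∈ D, ∀ Z ∈ D, r X Y → r Y Z → r X Z) ∧
  (∀ X ∈ D, ∀ Y ∈ D, X ≠ Y → r X Y ∨ r Y X)

/-- The restriction of `r` to `P` is the lex order. -/
def RestrLex (r : Finset ℕ → Finset ℕ → Prop) (P : Finset (Finset ℕ)) : Prop :=
  ∀ A ∈ P, ∀ B ∈ P, (r A B ↔ lexLt A B)

/-- The restriction of `r` to `P` is the antilex order. -/
def RestrAntilex (r : Finset ℕ → Finset ℕ → Prop) (P : Finset (Finset ℕ)) : Prop :=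
  ∀ A ∈ P, ∀ B ∈ P, (r A B ↔ lexLt B A)

/-- `r` is an admissible order on the `k`-element subsets of `[n]`. -/
def Admissible (n k : ℕ) (r : Finset ℕ → Finset ℕ → Prop) : Prop :=
  IsStrictOrdOn (ksubsets n k) r ∧
  ∀ X ∈ ksubsets n (k+1), RestrLex r (packet X) ∨ RestrAntilex r (packet X)

/-- `r` is a coadmissible order on the `k`-element subsets of `[n]`. -/
def Coadmissible (n k : ℕ) (r : Finset ℕ → Finset ℕ → Prop) : Prop :=
  IsStrictOrdOn (ksubsets n k) r ∧
  ∀ X ∈ ksubsets n (k-1), RestrLex r (copacket n X) ∨ RestrAntilex r (copacket n X)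

open scoped Classical in
/-- The reversal set of an order on the `k`-element subsets of `[n]`:
the `(k+1)`-element subsets whose packet is restricted to the antilex order. -/
noncomputable def Rev (n k : ℕ) (r : Finset ℕ → Finset ℕ → Prop) : Finset (Finset ℕ) :=
  (ksubsets n (k+1)).filter (fun X => RestrAntilex r (packet X))

open scoped Classical in
/-- The coreversal set of an order on the `k`-element subsets of `[n]`:
the `(k-1)`-element subsets whose copacket is restricted to the antilex order. -/
noncomputable def Corev (n k : ℕ) (r : Finset ℕ → Finset ℕ → Prop) : Finset (Finset ℕ) :=
  (ksubsets n (k-1)).filter (fun X => RestrAntilex r (copacket n X))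

/-- `P ∩ I` is a prefix (lower set) of `P` in lex order. -/
def IsLexPrefix (P I : Finset (Finset ℕ)) : Prop :=
  ∀ A ∈ P, ∀ B ∈ P, B ∈ I → lexLt A B → A ∈ I

/-- `P ∩ I` is a suffix (upper set) of `P` in lex order. -/
def IsLexSuffix (P I : Finset (Finset ℕ)) : Prop :=
  ∀ A ∈ P, ∀ B ∈ P, A ∈ I → lexLt A B → B ∈ I

/-- `I` is a consistent subset of the `k`-element subsets of `[n]`. -/
def Consistent (n k : ℕ) (I : Finset (Finset ℕ)) : Prop :=
  I ⊆ ksubsets n k ∧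
  ∀ X ∈ ksubsets n (k+1), IsLexPrefix (packet X) I ∨ IsLexSuffix (packet X) I

/-- `I` is a coconsistent subset of the `k`-element subsets of `[n]`. -/
def CoConsistent (n k : ℕ) (I : Finset (Finset ℕ)) : Prop :=
  I ⊆ ksubsets n k ∧
  ∀ X ∈ ksubsets n (k-1), IsLexPrefix (copacket n X) I ∨ IsLexSuffix (copacket n X) I

/-- Deletion `I \ n` of a set of subsets. -/
def del (I : Finset (Finset ℕ)) (n : ℕ) : Finset (Finset ℕ) := I.filter (fun X => n ∉ X)

/-- Contraction `I / n` of a set of subsets. -/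
def contr (I : Finset (Finset ℕ)) (n : ℕ) : Finset (Finset ℕ) :=
  (I.filter (fun X => n ∈ X)).image (fun X => X.erase n)

/-- Contraction `ρ / n` of a linear order: `X < Y` iff `X ∪ {n} < Y ∪ {n}` in `ρ`. -/
def contrOrd (r : Finset ℕ → Finset ℕ → Prop) (n : ℕ) : Finset ℕ → Finset ℕ → Prop :=
  fun X Y => r (insert n X) (insert n Y)

/-- The Gale order: componentwise comparison of the increasing enumerations. -/
def galeLe (A B : Finset ℕ) : Prop :=
  List.Forall₂ (· ≤ ·) (A.sort (· ≤ ·)) (B.sort (· ≤ ·))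

/-- The consistent poset relation `≺_I` on the `(k-1)`-element subsets of `[n]`:
within the packet of `X ∈ I` the antilex order, and within the packet of
`X ∉ I` the lex order, transitively closed. -/
def cpRel (n k : ℕ) (I : Finset (Finset ℕ)) : Finset ℕ → Finset ℕ → Prop :=
  Relation.TransGen (fun A B =>
    ∃ X ∈ ksubsets n k, A ∈ packet X ∧ B ∈ packet X ∧
      ((X ∈ I ∧ lexLt B A) ∨ (X ∉ I ∧ lexLt A B)))

/-- A single-step-inclusion cover within the collection `C`. -/
def SSIStep (C : Finset (Finset ℕ) → Prop) (A B : Finset (Finset ℕ)) : Prop :=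
  C A ∧ C B ∧ ∃ Y, Y ∉ A ∧ B = insert Y A

/-- The single step inclusion order on the collection `C`. -/
def SSILe (C : Finset (Finset ℕ) → Prop) : Finset (Finset ℕ) → Finset (Finset ℕ) → Prop :=
  Relation.ReflTransGen (SSIStep C)

lemma lexLt_compl_aux {n : ℕ} {A B : Finset ℕ} (hA : A ⊆ Finset.Icc 1 n)
    (hB : B ⊆ Finset.Icc 1 n) (h : lexLt B A) :
    lexLt (Finset.Icc 1 n \ A) (Finset.Icc 1 n \ B) := by
  obtain ⟨m, hmB, hmA, hag⟩ := h
  refine ⟨m, ?_, ?_, ?_⟩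
  · simp [mem_sdiff, hB hmB, hmA]
  · simp [mem_sdiff, hmB]
  · intro a ha
    have := hag a ha
    simp only [mem_sdiff]
    tauto

lemma lexLt_compl {n : ℕ} {A B : Finset ℕ} (hA : A ⊆ Finset.Icc 1 n)
    (hB : B ⊆ Finset.Icc 1 n) :
    lexLt (Finset.Icc 1 n \ A) (Finset.Icc 1 n \ B) ↔ lexLt B A := by
  constructor
  · intro h
    have := lexLt_compl_aux (A := Finset.Icc 1 n \ B) (B := Finset.Icc 1 n \ A)
      (sdiff_subset) (sdiff_subset) h
    rwa [Finset.sdiff_sdiff_eq_self hA, Finset.sdiff_sdiff_eq_self hB] at this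
  · exact lexLt_compl_aux hA hB

lemma mem_packet_subset {A Y : Finset ℕ} (h : A ∈ packet Y) : A ⊆ Y := by
  simp only [packet, mem_image] at h
  obtain ⟨y, _, rfl⟩ := h
  exact erase_subset _ _

lemma copacket_eq_image_compl {n : ℕ} {X : Finset ℕ} (hX : X ⊆ Finset.Icc 1 n) :
    copacket n X = (packet (Finset.Icc 1 n \ X)).image (fun A => Finset.Icc 1 n \ A) := by
  unfold copacket packet
  rw [Finset.image_image]
  apply Finset.image_congr
  intro y hy
  simp only [mem_sdiff, mem_coe] at hy
  ext a
  simp only [Function.comp_apply, mem_sdiff, mem_erase, mem_insert]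
  have haX : a ∈ X → a ∈ Finset.Icc 1 n := fun h => hX h
  by_cases hay : a = y
  · subst hay; simp [hy.1]
  · tauto

lemma restrAntilex_compl {n : ℕ} {X : Finset ℕ} (hX : X ⊆ Finset.Icc 1 n)
    (r : Finset ℕ → Finset ℕ → Prop) :
    RestrAntilex (fun A B => r (Finset.Icc 1 n \ B) (Finset.Icc 1 n \ A)) (copacket n X) ↔
      RestrAntilex r (packet (Finset.Icc 1 n \ X)) := by
  rw [copacket_eq_image_compl hX]
  constructor
  · intro h A hA B hB
    have hAn : A ⊆ Finset.Icc 1 n := (mem_packet_subset hA).trans sdiff_subset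
    have hBn : B ⊆ Finset.Icc 1 n := (mem_packet_subset hB).trans sdiff_subset
    have := h (Finset.Icc 1 n \ B) (mem_image_of_mem _ hB)
      (Finset.Icc 1 n \ A) (mem_image_of_mem _ hA)
    simp only [Finset.sdiff_sdiff_eq_self hAn, Finset.sdiff_sdiff_eq_self hBn,
      lexLt_compl hAn hBn] at this
    exact this
  · intro h A hA B hB
    simp only [mem_image] at hA hB
    obtain ⟨A', hA', rfl⟩ := hA
    obtain ⟨B', hB', rfl⟩ := hB
    have hAn : A' ⊆ Finset.Icc 1 n := (mem_packet_subset hA').trans sdiff_subset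
    have hBn : B' ⊆ Finset.Icc 1 n := (mem_packet_subset hB').trans sdiff_subset
    simp only [Finset.sdiff_sdiff_eq_self hAn, Finset.sdiff_sdiff_eq_self hBn,
      lexLt_compl hBn hAn]
    exact h B' hB' A' hA'

lemma mem_ksubsets {n k : ℕ} {X : Finset ℕ} :
    X ∈ ksubsets n k ↔ X ⊆ Finset.Icc 1 n ∧ X.card = k := by
  simp [ksubsets, Finset.mem_powersetCard]

lemma compl_mem_ksubsets {n k m : ℕ} {X : Finset ℕ} (hkn : k ≤ n) (hm : m = n - k)
    (hX : X ∈ ksubsets n k) : Finset.Icc 1 n \ X ∈ ksubsets n m := by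
  rw [mem_ksubsets] at hX ⊢
  refine ⟨sdiff_subset, ?_⟩
  rw [card_sdiff_of_subset hX.1, Nat.card_Icc, hX.2, hm]
  omega

/-- For admissible `ρ` on the `k`-element subsets of `[n]` (`1 ≤ k < n`),
the coreversal set of the complemented-reversed order `β(ρ)` equals the complemented
reversal set of `ρ`. -/
theorem corev_beta_eq_complement_rev (n k : ℕ) (hk : 1 ≤ k) (hkn : k < n)
    (r : Finset ℕ → Finset ℕ → Prop) (hr : Admissible n k r) :
    Corev n (n - k) (fun A B => r ((Finset.Icc 1 n) \ B) ((Finset.Icc 1 n) \ A)) =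
      (Rev n k r).image (fun X => Finset.Icc 1 n \ X) := by
  classical
  ext X
  simp only [Corev, Rev, mem_filter, mem_image]
  constructor
  · rintro ⟨hX, hanti⟩
    have h1 : (n - k) - 1 = n - (k + 1) := by omega
    rw [h1] at hX
    have hXsub : X ⊆ Finset.Icc 1 n := (mem_ksubsets.mp hX).1
    refine ⟨Finset.Icc 1 n \ X, ⟨?_, ?_⟩, ?_⟩
    · exact compl_mem_ksubsets (by omega) (by omega) hX
    · exact (restrAntilex_compl hXsub r).mp hanti
    · exact Finset.sdiff_sdiff_eq_self hXsub
  · rintro ⟨Y, ⟨hY, hanti⟩, rfl⟩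
    have hYsub : Y ⊆ Finset.Icc 1 n := (mem_ksubsets.mp hY).1
    have h1 : (n - k) - 1 = n - (k + 1) := by omega
    refine ⟨?_, ?_⟩
    · rw [h1]; exact compl_mem_ksubsets (by omega) rfl hY
    · apply (restrAntilex_compl sdiff_subset r).mpr
      rwa [Finset.sdiff_sdiff_eq_self hYsub]
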